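/- arXiv:2109.07553 — 3 statements merged into one kernel-verified Lean document; each statement's English description precedes it below -/
import Mathlib

section
/- Let c ≥ 1 and k ∈ ℤ. If Q and Q' are dyadic cubes of side length 2^{-k} (i.e., Q = ∏_{i=1}^n [m_i/2^k, (m_i+1)/2^k] and Q' = ∏_{i=1}^n [m'_i/2^k, (m'_i+1)/2^k] for m, m' ∈ ℤ^n), and the dilation cQ (the cube with the same center as Q and side length c·2^{-k}) intersects Q', then the dilation ⌊c⌋Q also intersects Q'. -/
open MeasureTheory

noncomputable section

/-- The closed dyadic cube `Q_{k,m} = ∏ᵢ [mᵢ/2ᵏ, (mᵢ+1)/2ᵏ]` in `ℝⁿ`. -/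
def dyadicCube {n : ℕ} (k : ℤ) (m : Fin n → ℤ) : Set (Fin n → ℝ) :=
  {y | ∀ i, (m i : ℝ) / 2 ^ k ≤ y i ∧ y i ≤ ((m i : ℝ) + 1) / 2 ^ k}

/-- The dilation `c·Q_{k,m}`: the cube with the same center as `Q_{k,m}`
and side length `c · 2^{-k}` (in the sup norm). -/
def dilDyadic {n : ℕ} (c : ℝ) (k : ℤ) (m : Fin n → ℤ) : Set (Fin n → ℝ) :=
  {y | ∀ i, |y i - ((m i : ℝ) + 1 / 2) / 2 ^ k| ≤ c * (2 : ℝ) ^ (-k) / 2}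

open Set

-- Twice the distance from `b + 1/2` to `[a, a + 1]` is an integer (`0` or `2|a - b| - 1`),
-- so a bound `c` on it can be replaced by `⌊c⌋`.
theorem exists_mem_Icc_abs_sub_le_floor {a b : ℤ} {c s : ℝ}
    (hs : s ∈ Icc (a : ℝ) (a + 1)) (hsc : |s - (b + 1 / 2)| ≤ c / 2) :
    ∃ s' ∈ Icc (a : ℝ) (a + 1), |s' - (b + 1 / 2)| ≤ ⌊c⌋ / 2 := by
  obtain ⟨has, hsa⟩ := hs
  have hsc' := abs_le.mp hsc
  rcases lt_trichotomy b a with hba | rfl | hab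
  · refine ⟨a, ⟨le_rfl, by linarith⟩, ?_⟩
    have hba' : (b : ℝ) + 1 ≤ a := by exact_mod_cast hba
    have hz : ((2 * (a - b) - 1 : ℤ) : ℝ) ≤ ⌊c⌋ := by
      exact_mod_cast Int.le_floor.mpr (by push_cast; linarith)
    push_cast at hz
    rw [abs_of_nonneg (by linarith)]
    linarith
  · refine ⟨b + 1 / 2, ⟨by linarith, by linarith⟩, ?_⟩
    have hc : (0 : ℝ) ≤ ⌊c⌋ := by exact_mod_cast Int.floor_nonneg.mpr (by linarith)
    simpa using div_nonneg hc two_pos.le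
  · refine ⟨a + 1, ⟨by linarith, le_rfl⟩, ?_⟩
    have hab' : (a : ℝ) + 1 ≤ b := by exact_mod_cast hab
    have hz : ((2 * (b - a) - 1 : ℤ) : ℝ) ≤ ⌊c⌋ := by
      exact_mod_cast Int.le_floor.mpr (by push_cast; linarith)
    push_cast at hz
    rw [abs_of_nonpos (by linarith)]
    linarith

theorem mem_dyadicCube_iff {n : ℕ} {k : ℤ} {m : Fin n → ℤ} {y : Fin n → ℝ} :
    y ∈ dyadicCube k m ↔ ∀ i, 2 ^ k * y i ∈ Icc (m i : ℝ) (m i + 1) := by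
  have hk : (0 : ℝ) < 2 ^ k := zpow_pos two_pos k
  simp only [dyadicCube, mem_ofPred_eq, mem_Icc, div_le_iff₀' hk, le_div_iff₀' hk]

theorem mem_dilDyadic_iff {n : ℕ} {c : ℝ} {k : ℤ} {m : Fin n → ℤ} {y : Fin n → ℝ} :
    y ∈ dilDyadic c k m ↔ ∀ i, |2 ^ k * y i - (m i + 1 / 2)| ≤ c / 2 := by
  have hk : (0 : ℝ) < 2 ^ k := zpow_pos two_pos k
  refine forall_congr' fun i => ?_
  have hscale : 2 ^ k * y i - (m i + 1 / 2) = 2 ^ k * (y i - (m i + 1 / 2) / 2 ^ k) := by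
    field_simp
  rw [hscale, abs_mul, abs_of_pos hk, zpow_neg, show c * (2 ^ k)⁻¹ / 2 = c / 2 / 2 ^ k by ring,
    le_div_iff₀' hk]

theorem dilation_floor_intersect_general {n : ℕ} (c : ℝ) (k : ℤ)
    (m m' : Fin n → ℤ)
    (h : (dilDyadic c k m ∩ dyadicCube k m').Nonempty) :
    (dilDyadic (⌊c⌋ : ℝ) k m ∩ dyadicCube k m').Nonempty := by
  obtain ⟨y, hyc, hyQ⟩ := h
  rw [mem_dilDyadic_iff] at hyc
  rw [mem_dyadicCube_iff] at hyQ
  choose s hsQ hsc using fun i => exists_mem_Icc_abs_sub_le_floor (hyQ i) (hyc i)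
  have hs : ∀ i, (2 : ℝ) ^ k * (s i / 2 ^ k) = s i := fun i => by field_simp
  refine ⟨fun i => s i / 2 ^ k, ?_, ?_⟩
  · simpa only [mem_dilDyadic_iff, hs] using hsc
  · simpa only [mem_dyadicCube_iff, hs] using hsQ

/-- If `c ≥ 1` and the dilation `cQ` of a dyadic cube `Q` of generation `k`
meets another dyadic cube `Q'` of generation `k`, then `⌊c⌋Q` also meets `Q'`. -/
theorem dilation_floor_intersect {n : ℕ} (c : ℝ) (hc : 1 ≤ c) (k : ℤ)
    (m m' : Fin n → ℤ)
    (h : (dilDyadic c k m ∩ dyadicCube k m').Nonempty) :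
    (dilDyadic (⌊c⌋ : ℝ) k m ∩ dyadicCube k m').Nonempty :=
  dilation_floor_intersect_general c k m m' h
end
end

section
/- Let c ≥ 1 and k ∈ ℤ. The covering multiplicity of the family {cQ_{k,m} : m ∈ ℤ^n} of dilated dyadic cubes of generation k is at most (⌊c⌋+2)^n; that is, every point x ∈ ℝ^n belongs to at most (⌊c⌋+2)^n of the cubes cQ_{k,m}. -/
open MeasureTheory

noncomputable section

/-- The covering multiplicity of the family `{cQ_{k,m} : m ∈ ℤⁿ}` of dilated dyadic
cubes of generation `k` is at most `(⌊c⌋ + 2)ⁿ`: every point `x ∈ ℝⁿ` belongs to at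
most `(⌊c⌋ + 2)ⁿ` of the cubes `cQ_{k,m}`. -/
theorem multiplicity_dilated_dyadic {n : ℕ} (c : ℝ) (hc : 1 ≤ c) (k : ℤ)
    (x : Fin n → ℝ) :
    ∃ s : Finset (Fin n → ℤ),
      {m : Fin n → ℤ | x ∈ dilDyadic c k m} ⊆ ↑s ∧ (s.card : ℤ) ≤ (⌊c⌋ + 2) ^ n := by
  set a : Fin n → ℝ := fun i => x i * 2 ^ k - 1 / 2
  refine ⟨Fintype.piFinset fun i => Finset.Icc ⌈a i - c / 2⌉ ⌊a i + c / 2⌋, ?_, ?_⟩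
  · intro m hm
    simp only [Set.mem_setOf_eq, dilDyadic] at hm
    simp only [Finset.coe_sort_coe, Fintype.mem_piFinset, Finset.mem_Icc,
      Finset.mem_coe]
    intro i
    have hm' := hm i
    have h2k : (0 : ℝ) < 2 ^ k := zpow_pos (by norm_num) k
    have key : |a i - m i| ≤ c / 2 := by
      have e1 : (x i - ((m i : ℝ) + 1 / 2) / 2 ^ k) * 2 ^ k = a i - m i := by
        field_simp [a]
        ring
      have e2 : c * (2:ℝ) ^ (-k) / 2 * 2 ^ k = c / 2 := by
        rw [zpow_neg]
        field_simp
      calc |a i - (m i : ℝ)|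
          = |x i - ((m i : ℝ) + 1 / 2) / 2 ^ k| * 2 ^ k := by
            rw [← e1, abs_mul, abs_of_pos h2k]
        _ ≤ c * (2:ℝ) ^ (-k) / 2 * 2 ^ k :=
            mul_le_mul_of_nonneg_right hm' h2k.le
        _ = c / 2 := e2
    rw [abs_le] at key
    constructor
    · exact Int.ceil_le.mpr (by linarith [key.2])
    · exact Int.le_floor.mpr (by linarith [key.1])
  · rw [Fintype.card_piFinset]
    push_cast
    have hb : ∀ i : Fin n, ((Finset.Icc ⌈a i - c / 2⌉ ⌊a i + c / 2⌋).card : ℤ)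
        ≤ ⌊c⌋ + 2 := by
      intro i
      rw [Int.card_Icc]
      have h1 : (⌈a i - c / 2⌉ : ℝ) ≥ a i - c / 2 := Int.le_ceil _
      have h2 : (⌊a i + c / 2⌋ : ℝ) ≤ a i + c / 2 := Int.floor_le _
      have h3 : (⌊a i + c / 2⌋ : ℝ) - ⌈a i - c / 2⌉ ≤ c := by linarith
      have h4 : ⌊a i + c / 2⌋ - ⌈a i - c / 2⌉ ≤ ⌊c⌋ := by
        rw [Int.le_floor]; push_cast; linarith
      have := Int.toNat_le_toNat (add_le_add_right h4 1)
      calc ((⌊a i + c / 2⌋ + 1 - ⌈a i - c / 2⌉).toNat : ℤ)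
          ≤ ((⌊c⌋ + 1).toNat : ℤ) := by
            exact_mod_cast Int.toNat_le_toNat (by omega)
        _ ≤ ⌊c⌋ + 2 := by
            have : (1:ℤ) ≤ ⌊c⌋ := by exact_mod_cast Int.le_floor.mpr (by simpa using hc)
            omega
    calc (∏ i : Fin n, ((Finset.Icc ⌈a i - c / 2⌉ ⌊a i + c / 2⌋).card : ℤ))
        ≤ ∏ i : Fin n, (⌊c⌋ + 2) := by
          apply Finset.prod_le_prod
          · intro i _; positivity
          · intro i _; exact hb i
      _ = (⌊c⌋ + 2) ^ n := by simp
end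
end

section
/- Let S ⊂ ℝ^n be closed and nonempty, d ∈ (0,n), λ ∈ (0,1), c ≥ 1, κ ∈ ℕ. For each dyadic cube Q ∈ 𝒟₊ belonging to the family 𝒟ℱ := {Q dyadic, l(Q) ≤ 1 : ℋ^d_∞(Q ∩ S) ≥ λ l(Q)^d}, define the special cavity Ω(Q) := cQ ∖ ∪{cQ' : Q' ∈ 𝒟ℱ, l(Q') ≤ 2^{-κ} l(Q)}. Then the covering multiplicity of the family {Ω(Q) : Q ∈ 𝒟ℱ} is at most 2κ(⌊c⌋+2)^n: every point of ℝ^n lies in at most 2κ(⌊c⌋+2)^n of the sets Ω(Q). -/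
open MeasureTheory ENNReal

noncomputable section

/-- The `d`-Hausdorff content. -/
def hContent {n : ℕ} (d : ℝ) (S : Set (Fin n → ℝ)) : ℝ≥0∞ :=
  ⨅ (U : ℕ → Set (Fin n → ℝ)) (_ : S ⊆ ⋃ i, U i), ∑' i, EMetric.diam (U i) ^ d

/-- The family `𝒟ℱ(d,λ)` of `(d,λ)`-thick dyadic cubes (of nonnegative
generation), encoded by indices `(k,m) ∈ ℕ × ℤⁿ`. -/
def DF {n : ℕ} (S : Set (Fin n → ℝ)) (d lam : ℝ) : Set (ℕ × (Fin n → ℤ)) :=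
  {q | ENNReal.ofReal (lam * (((2 : ℝ) ^ (-(q.1 : ℤ))) ^ d))
        ≤ hContent d (dyadicCube (q.1 : ℤ) q.2 ∩ S)}

/-- The special cavity
`Ω_{c,κ}(Q) = cQ ∖ ∪ {cQ' : Q' ∈ 𝒟ℱ(d,λ), l(Q') ≤ 2^{-κ} l(Q)}`. -/
def cavity {n : ℕ} (S : Set (Fin n → ℝ)) (d lam c : ℝ) (κ : ℕ)
    (q : ℕ × (Fin n → ℤ)) : Set (Fin n → ℝ) :=
  dilDyadic c (q.1 : ℤ) q.2 \
    ⋃ (q' : ℕ × (Fin n → ℤ)) (_ : q' ∈ DF S d lam ∧ q.1 + κ ≤ q'.1),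
      dilDyadic c (q'.1 : ℤ) q'.2

/-- The covering multiplicity of the family of special cavities
`{Ω_{c,κ}(Q) : Q ∈ 𝒟ℱ(d,λ)}` is at most `2κ(⌊c⌋+2)ⁿ`. -/
theorem cavity_multiplicity {n : ℕ} (S : Set (Fin n → ℝ)) (hS : IsClosed S)
    (hSne : S.Nonempty) (d lam c : ℝ) (κ : ℕ)
    (hd : 0 < d ∧ d < n) (hlam : 0 < lam ∧ lam < 1) (hc : 1 ≤ c) (hκ : 1 ≤ κ)
    (x : Fin n → ℝ) :
    ∃ s : Finset (ℕ × (Fin n → ℤ)),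
      {q | q ∈ DF S d lam ∧ x ∈ cavity S d lam c κ q} ⊆ ↑s ∧
        (s.card : ℤ) ≤ 2 * κ * (⌊c⌋ + 2) ^ n := by
  classical
  have hfl : (1 : ℤ) ≤ ⌊c⌋ := by
    rw [Int.le_floor]; exact_mod_cast hc
  have hbase : (0 : ℤ) ≤ ⌊c⌋ + 2 := by linarith
  have hRHSnonneg : (0 : ℤ) ≤ 2 * κ * (⌊c⌋ + 2) ^ n := by
    have := pow_nonneg hbase n
    positivity
  set T : Set (ℕ × (Fin n → ℤ)) :=
    {q | q ∈ DF S d lam ∧ x ∈ cavity S d lam c κ q} with hT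
  by_cases hTe : T = ∅
  · exact ⟨∅, by rw [hTe]; simp, by simpa using hRHSnonneg⟩
  obtain ⟨q₀, hq₀⟩ := Set.nonempty_iff_ne_empty.mpr hTe
  -- coordinate bounds
  set a : ℕ → Fin n → ℤ := fun k i => ⌈(2 : ℝ) ^ k * x i - 1 / 2 - c / 2⌉ with ha
  set b : ℕ → Fin n → ℤ := fun k i => ⌊(2 : ℝ) ^ k * x i - 1 / 2 + c / 2⌋ with hb
  have hcoord : ∀ q ∈ T, ∀ i, a q.1 i ≤ q.2 i ∧ q.2 i ≤ b q.1 i := by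
    intro q hq i
    have hdil : x ∈ dilDyadic c (q.1 : ℤ) q.2 := hq.2.1
    have h1 := hdil i
    have hP : (0 : ℝ) < 2 ^ q.1 := by positivity
    have hz : ((2 : ℝ) ^ (q.1 : ℤ)) = 2 ^ q.1 := by
      exact_mod_cast zpow_natCast (2 : ℝ) q.1
    have hz' : ((2 : ℝ) ^ (-(q.1 : ℤ))) = (2 ^ q.1)⁻¹ := by
      rw [zpow_neg, hz]
    rw [hz, hz'] at h1
    have key : |2 ^ q.1 * x i - ((q.2 i : ℝ) + 1 / 2)| ≤ c / 2 := by
      have := mul_le_mul_of_nonneg_left h1 hP.le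
      calc |2 ^ q.1 * x i - ((q.2 i : ℝ) + 1 / 2)|
          = (2 : ℝ) ^ q.1 * |x i - ((q.2 i : ℝ) + 1 / 2) / 2 ^ q.1| := by
            rw [← abs_of_pos hP, ← abs_mul]
            congr 1
            field_simp
            simp only [abs_of_pos hP]
        _ ≤ 2 ^ q.1 * (c * (2 ^ q.1)⁻¹ / 2) := this
        _ = c / 2 := by field_simp
    rw [abs_le] at key
    constructor
    · rw [ha]; simp only []
      rw [Int.ceil_le]
      push_cast
      linarith [key.2]
    · rw [hb]; simp only []
      rw [Int.le_floor]
      push_cast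
      linarith [key.1]
  -- generation bounds
  have hgen : ∀ q ∈ T, ∀ q' ∈ T, q'.1 < q.1 + κ := by
    intro q hq q' hq'
    by_contra h
    push_neg at h
    have hxcav := hq.2
    apply hxcav.2
    refine Set.mem_iUnion.mpr ⟨q', Set.mem_iUnion.mpr ⟨⟨hq'.1, h⟩, hq'.2.1⟩⟩
  set K : Finset ℕ := Finset.Icc (q₀.1 + 1 - κ) (q₀.1 + κ - 1) with hK
  set s : Finset (ℕ × (Fin n → ℤ)) :=
    K.biUnion (fun k =>
      (Fintype.piFinset fun i => Finset.Icc (a k i) (b k i)).image (fun m => (k, m)))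
    with hs
  refine ⟨s, ?_, ?_⟩
  · intro q hq
    have h1 := hgen q₀ hq₀ q hq
    have h2 := hgen q hq q₀ hq₀
    have hkK : q.1 ∈ K := by
      rw [hK, Finset.mem_Icc]; omega
    exact Finset.mem_coe.mpr (Finset.mem_biUnion.mpr ⟨q.1, hkK,
      Finset.mem_image.mpr ⟨q.2, Fintype.mem_piFinset.mpr
        (fun i => Finset.mem_Icc.mpr (hcoord q hq i)), rfl⟩⟩)
  · set N : ℕ := (⌊c⌋ + 1).toNat with hN
    have hIccCard : ∀ k i, (Finset.Icc (a k i) (b k i)).card ≤ N := by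
      intro k i
      rw [Int.card_Icc, hN]
      apply Int.toNat_le_toNat
      have hble : ((b k i : ℝ)) ≤ 2 ^ k * x i - 1 / 2 + c / 2 := Int.floor_le _
      have hale : (2 : ℝ) ^ k * x i - 1 / 2 - c / 2 ≤ (a k i : ℝ) := Int.le_ceil _
      have : ((b k i - a k i : ℤ) : ℝ) ≤ c := by push_cast; linarith
      have : b k i - a k i ≤ ⌊c⌋ := Int.le_floor.mpr this
      omega
    have hpi : ∀ k, (Fintype.piFinset fun i => Finset.Icc (a k i) (b k i)).card ≤ N ^ n := by
      intro k
      rw [Fintype.card_piFinset]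
      calc ∏ i, (Finset.Icc (a k i) (b k i)).card ≤ ∏ _i : Fin n, N :=
            Finset.prod_le_prod' (fun i _ => hIccCard k i)
        _ = N ^ n := by simp
    have hKcard : K.card ≤ 2 * κ := by
      rw [hK, Nat.card_Icc]; omega
    have hscard : s.card ≤ 2 * κ * N ^ n := by
      calc s.card ≤ ∑ k ∈ K,
            ((Fintype.piFinset fun i => Finset.Icc (a k i) (b k i)).image
              (fun m => (k, m))).card := Finset.card_biUnion_le
        _ ≤ ∑ _k ∈ K, N ^ n := Finset.sum_le_sum (fun k _ =>
            le_trans Finset.card_image_le (hpi k))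
        _ = K.card * N ^ n := by rw [Finset.sum_const, smul_eq_mul]
        _ ≤ 2 * κ * N ^ n := Nat.mul_le_mul_right _ hKcard
    have hNle : (N : ℤ) ≤ ⌊c⌋ + 2 := by
      rw [hN]; omega
    calc (s.card : ℤ) ≤ (2 * κ * N ^ n : ℕ) := by exact_mod_cast hscard
      _ = 2 * κ * (N : ℤ) ^ n := by push_cast; ring
      _ ≤ 2 * κ * (⌊c⌋ + 2) ^ n := by
          apply mul_le_mul_of_nonneg_left _ (by positivity)
          exact pow_le_pow_left₀ (by positivity) hNle n
end
end
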